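/- Let 1 < p ≤ 2 ≤ s < ∞, let (g_k) be a sequence of independent standard gaussian variables on a probability space (Ω, ℙ), and let P = ∑_k g_k ⊗ g_k denote the orthogonal projection of L_2(Ω, ℙ) onto the closed span of (g_k), f ↦ ∑_k (∫ f g_k dℙ) g_k. Then P defines a bounded operator from L_p(Ω, ℙ) to L_s(Ω, ℙ) with γ_2(P : L_p → L_s) ≤ c_0² · √(s p'), where c_0 is the universal constant in Kahane's inequality and p' = p/(p-1). -/

import Mathlib

open MeasureTheory ENNReal

noncomputable section

/-- The (old Mathlib) topological dual `E →L[𝕜] 𝕜` as a type synonym carrying the normed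
structure (removed from Mathlib; restored here with its old definition). -/
def NormedSpace.Dual (𝕜 : Type*) [NontriviallyNormedField 𝕜] (E : Type*)
    [SeminormedAddCommGroup E] [NormedSpace 𝕜 E] : Type _ :=
  E →L[𝕜] 𝕜

instance {𝕜 : Type*} [NontriviallyNormedField 𝕜] {E : Type*} [SeminormedAddCommGroup E]
    [NormedSpace 𝕜 E] : SeminormedAddCommGroup (NormedSpace.Dual 𝕜 E) :=
  inferInstanceAs (SeminormedAddCommGroup (E →L[𝕜] 𝕜))

instance {𝕜 : Type*} [NontriviallyNormedField 𝕜] {E : Type*} [SeminormedAddCommGroup E]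
    [NormedSpace 𝕜 E] : NormedSpace 𝕜 (NormedSpace.Dual 𝕜 E) :=
  inferInstanceAs (NormedSpace 𝕜 (E →L[𝕜] 𝕜))

instance {𝕜 : Type*} [NontriviallyNormedField 𝕜] {E : Type*} [SeminormedAddCommGroup E]
    [NormedSpace 𝕜 E] : FunLike (NormedSpace.Dual 𝕜 E) E 𝕜 :=
  inferInstanceAs (FunLike (E →L[𝕜] 𝕜) E 𝕜)

instance {𝕜 : Type*} [NontriviallyNormedField 𝕜] {E : Type*} [SeminormedAddCommGroup E]
    [NormedSpace 𝕜 E] : ContinuousLinearMapClass (NormedSpace.Dual 𝕜 E) 𝕜 E 𝕜 :=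
  inferInstanceAs (ContinuousLinearMapClass (E →L[𝕜] 𝕜) 𝕜 E 𝕜)

/-- The dual (adjoint) operator `v* : Z* → X*` of a bounded operator `v : X → Z`. -/
def dualOp {X Z : Type*} [NormedAddCommGroup X] [NormedSpace ℝ X]
    [NormedAddCommGroup Z] [NormedSpace ℝ Z] (u : X →L[ℝ] Z) :
    NormedSpace.Dual ℝ Z →L[ℝ] NormedSpace.Dual ℝ X :=
  LinearMap.mkContinuous
    { toFun := fun f => f.comp u
      map_add' := fun f g => by apply ContinuousLinearMap.ext; intro x; rfl
      map_smul' := fun c f => by apply ContinuousLinearMap.ext; intro x; rfl }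
    ‖u‖ (fun f => ((f.opNorm_comp_le u).trans_eq (mul_comm _ _)))

/-- `ℓ_p`-type norm of a finite family of reals (with the convention `max` for `p = ∞`). -/
def lpNormF (p : ℝ≥0∞) {n : ℕ} (r : Fin n → ℝ) : ℝ :=
  if p = ∞ then ⨆ k, |r k| else (∑ k, |r k| ^ p.toReal) ^ (1 / p.toReal)

/-- `c` is an admissible constant for absolute `p`-summability of `T`. -/
def IsSummingWith (p : ℝ≥0∞) {X Y : Type*} [NormedAddCommGroup X] [NormedSpace ℝ X]
    [NormedAddCommGroup Y] [NormedSpace ℝ Y] (T : X →L[ℝ] Y) (c : ℝ) : Prop :=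
  0 ≤ c ∧ ∀ (m : ℕ) (x : Fin m → X),
    lpNormF p (fun k => ‖T (x k)‖) ≤
      c * ⨆ f : {g : X →L[ℝ] ℝ // ‖g‖ ≤ 1}, lpNormF p (fun k => (f : X →L[ℝ] ℝ) (x k))

/-- The absolutely `p`-summing norm `π_p(T)` (with value `∞` if `T` is not `p`-summing). -/
def piE (p : ℝ≥0∞) {X Y : Type*} [NormedAddCommGroup X] [NormedSpace ℝ X]
    [NormedAddCommGroup Y] [NormedSpace ℝ Y] (T : X →L[ℝ] Y) : ℝ≥0∞ :=
  ⨅ c : {c : ℝ // IsSummingWith p T c}, ENNReal.ofReal (c : ℝ)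

/-- `c` is an admissible constant for a factorization of `T` through some `L_r(μ)` space. -/
def FactorsLrWith (r : ℝ≥0∞) (hr : 1 ≤ r) {X Y : Type*} [NormedAddCommGroup X] [NormedSpace ℝ X]
    [NormedAddCommGroup Y] [NormedSpace ℝ Y] (T : X →L[ℝ] Y) (c : ℝ) : Prop :=
  letI : Fact (1 ≤ r) := ⟨hr⟩
  ∃ (Ω : Type) (_ : MeasurableSpace Ω) (μ : Measure Ω)
    (R : X →L[ℝ] Lp ℝ r μ) (S : Lp ℝ r μ →L[ℝ] NormedSpace.Dual ℝ (NormedSpace.Dual ℝ Y)),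
    (∀ x, S (R x) = NormedSpace.inclusionInDoubleDual ℝ Y (T x)) ∧ ‖S‖ * ‖R‖ ≤ c

/-- The `Γ_r` factorization norm (`∞` if `T` does not factor through `L_r`). -/
def gammaE (r : ℝ≥0∞) (hr : 1 ≤ r) {X Y : Type*} [NormedAddCommGroup X] [NormedSpace ℝ X]
    [NormedAddCommGroup Y] [NormedSpace ℝ Y] (T : X →L[ℝ] Y) : ℝ≥0∞ :=
  ⨅ c : {c : ℝ // FactorsLrWith r hr T c}, ENNReal.ofReal (c : ℝ)

/-- The Gordon-Lewis property. -/
def HasGLP (Y : Type*) [NormedAddCommGroup Y] [NormedSpace ℝ Y] : Prop :=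
  ∃ c : ℝ, 0 < c ∧ ∀ (Z : Type) [NormedAddCommGroup Z] [NormedSpace ℝ Z] [CompleteSpace Z],
    ∀ v : Y →L[ℝ] Z, gammaE 1 le_rfl v ≤ ENNReal.ofReal c * piE 1 v

/-- The restricted Gordon-Lewis property `gl₂`. -/
def HasGL2 (Y : Type*) [NormedAddCommGroup Y] [NormedSpace ℝ Y] : Prop :=
  ∃ c : ℝ, 0 < c ∧ ∀ v : Y →L[ℝ] lp (fun _ : ℕ => ℝ) 2,
    gammaE 1 le_rfl v ≤ ENNReal.ofReal c * piE 1 v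

/-- The standard gaussian measure on `ℝ^n`. -/
def gaussPi (n : ℕ) : Measure (Fin n → ℝ) :=
  Measure.pi fun _ => ProbabilityTheory.gaussianReal 0 1

/-- First gaussian moment `∫ ‖∑ g_k x_k‖`. -/
def gaussAvg {Y : Type*} [NormedAddCommGroup Y] [NormedSpace ℝ Y] {n : ℕ} (x : Fin n → Y) : ℝ :=
  ∫ ω, ‖∑ k, ω k • x k‖ ∂gaussPi n

/-- `Y` has (gaussian) cotype `q`. -/
def HasCotype (q : ℝ) (Y : Type*) [NormedAddCommGroup Y] [NormedSpace ℝ Y] : Prop :=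
  ∃ c : ℝ, 0 < c ∧ ∀ (n : ℕ) (x : Fin n → Y),
    (∑ k, ‖x k‖ ^ q) ^ (1 / q) ≤ c * gaussAvg x

/-- `Y` has finite cotype. -/
def HasFiniteCotype (Y : Type*) [NormedAddCommGroup Y] [NormedSpace ℝ Y] : Prop :=
  ∃ q : ℝ, 2 ≤ q ∧ HasCotype q Y

/-- `X` contains `ℓ_p^n`'s uniformly. -/
def ContainsLpUniformly (p : ℝ≥0∞) (hp : 1 ≤ p) (X : Type*) [NormedAddCommGroup X]
    [NormedSpace ℝ X] : Prop :=
  letI : Fact (1 ≤ p) := ⟨hp⟩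
  ∃ lam : ℝ, 1 ≤ lam ∧ ∀ n : ℕ, ∃ J : PiLp p (fun _ : Fin n => ℝ) →ₗ[ℝ] X,
    ∀ v, ‖v‖ ≤ ‖J v‖ ∧ ‖J v‖ ≤ lam * ‖v‖

/-- `m`-dimensional volume of the section of `K ⊆ ℝ^n` by a subspace `H`
(computed via any linear isometry of `H` with `ℝ^m`; the value does not depend on it). -/
def secVol {n : ℕ} (m : ℕ) (H : Submodule ℝ (EuclideanSpace ℝ (Fin n)))
    (K : Set (EuclideanSpace ℝ (Fin n))) : ℝ≥0∞ :=
  ⨆ φ : H ≃ₗᵢ[ℝ] EuclideanSpace ℝ (Fin m), volume (⇑φ '' ((↑) ⁻¹' K : Set H))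

/-- `sup_H |K ∩ H|_{n-1}` over all hyperplanes `H` through the origin. -/
def hyperplaneSup {n : ℕ} (K : Set (EuclideanSpace ℝ (Fin n))) : ℝ≥0∞ :=
  ⨆ (H : Submodule ℝ (EuclideanSpace ℝ (Fin n))) (_ : Module.finrank ℝ H = n - 1),
    secVol (n - 1) H K

/-- `q` is a metric (isometric) quotient map, i.e. the target carries the quotient norm. -/
def IsMetricQuotientMap {E Q : Type*} [NormedAddCommGroup E] [NormedSpace ℝ E]
    [NormedAddCommGroup Q] [NormedSpace ℝ Q] (q : E →ₗ[ℝ] Q) : Prop :=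
  Function.Surjective q ∧ ∀ z : Q, ‖z‖ = sInf {r : ℝ | ∃ e : E, q e = z ∧ ‖e‖ = r}

/-- `F` is isometric to a quotient of some `L_p(μ)` space. -/
def IsLpQuotient (p : ℝ≥0∞) (hp : 1 ≤ p) (F : Type*) [NormedAddCommGroup F]
    [NormedSpace ℝ F] : Prop :=
  letI : Fact (1 ≤ p) := ⟨hp⟩
  ∃ (Ω : Type) (_ : MeasurableSpace Ω) (μ : Measure Ω) (q : Lp ℝ p μ →ₗ[ℝ] F),
    IsMetricQuotientMap q

/-- `F` is isometric to a quotient of a (closed) subspace of `Y`. -/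
def IsQuotientOfSubspace (Y : Type*) [NormedAddCommGroup Y] [NormedSpace ℝ Y]
    (F : Type*) [NormedAddCommGroup F] [NormedSpace ℝ F] : Prop :=
  ∃ (W : Submodule ℝ Y), IsClosed (W : Set Y) ∧ ∃ q : W →ₗ[ℝ] F, IsMetricQuotientMap q

/-- An `L_p`-section in `ℝ^n`: the preimage of the unit ball of some `L_p(μ)` under an
injective linear map. -/
def IsLpSection (p : ℝ≥0∞) (hp : 1 ≤ p) {n : ℕ} (S : Set (EuclideanSpace ℝ (Fin n))) : Prop :=
  letI : Fact (1 ≤ p) := ⟨hp⟩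
  ∃ (Ω : Type) (_ : MeasurableSpace Ω) (μ : Measure Ω)
    (T : EuclideanSpace ℝ (Fin n) →ₗ[ℝ] Lp ℝ p μ),
    Function.Injective T ∧ S = {x | ‖T x‖ ≤ 1}

/-- The formal identity `L_∞(μ) → L_p(μ)` for a finite measure `μ`. -/
def lpId (p : ℝ≥0∞) {Ω : Type*} [MeasurableSpace Ω] (μ : Measure Ω) [IsFiniteMeasure μ]
    (f : Lp ℝ ∞ μ) : Lp ℝ p μ :=
  ((Lp.memLp f).mono_exponent (le_top : p ≤ ∞)).toLp f

/-- `c` is an admissible constant for a `p`-integral factorization of `T`,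
i.e. `ι_Y T = S ∘ I ∘ R` with `R : X → L_∞(μ)`, `I : L_∞(μ) → L_p(μ)` the formal
identity over a probability space, `S : L_p(μ) → Y**`, and `‖S‖‖R‖ ≤ c`. -/
def IsIntegralWith (p : ℝ≥0∞) (hp : 1 ≤ p) {X Y : Type*} [NormedAddCommGroup X]
    [NormedSpace ℝ X] [NormedAddCommGroup Y] [NormedSpace ℝ Y] (T : X →L[ℝ] Y) (c : ℝ) : Prop :=
  letI : Fact (1 ≤ p) := ⟨hp⟩
  ∃ (Ω : Type) (_ : MeasurableSpace Ω) (μ : Measure Ω) (_ : IsProbabilityMeasure μ)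
    (R : X →L[ℝ] Lp ℝ ∞ μ) (S : Lp ℝ p μ →L[ℝ] NormedSpace.Dual ℝ (NormedSpace.Dual ℝ Y)),
    (∀ x, S (lpId p μ (R x)) = NormedSpace.inclusionInDoubleDual ℝ Y (T x)) ∧ ‖S‖ * ‖R‖ ≤ c

/-- The `p`-integral norm `ι_p(T)` (`∞` if `T` is not `p`-integral). -/
def iotaE (p : ℝ≥0∞) (hp : 1 ≤ p) {X Y : Type*} [NormedAddCommGroup X] [NormedSpace ℝ X]
    [NormedAddCommGroup Y] [NormedSpace ℝ Y] (T : X →L[ℝ] Y) : ℝ≥0∞ :=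
  ⨅ c : {c : ℝ // IsIntegralWith p hp T c}, ENNReal.ofReal (c : ℝ)

/-- The conjugate exponent in `ℝ≥0∞`. -/
def conjE (p : ℝ≥0∞) : ℝ≥0∞ :=
  if p = ∞ then 1 else if p = 1 then ∞ else ENNReal.ofReal (p.toReal / (p.toReal - 1))

/-- The elementary tensor `f ⊗ x` in the Bochner space `L_p(μ; X)`. -/
def tensorLp {X : Type*} [NormedAddCommGroup X] [NormedSpace ℝ X] (p : ℝ≥0∞)
    {Ω : Type*} [MeasurableSpace Ω] {μ : Measure Ω} (f : Lp ℝ p μ) (x : X) : Lp X p μ :=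
  (((ContinuousLinearMap.id ℝ ℝ).smulRight x)).compLp f

/-- The volume numbers `v_k(T)` of an operator. -/
def volNum (k : ℕ) {X Y : Type*} [NormedAddCommGroup X] [NormedSpace ℝ X]
    [NormedAddCommGroup Y] [NormedSpace ℝ Y] (T : X →L[ℝ] Y) : ℝ≥0∞ :=
  ⨆ (E : Submodule ℝ X) (_ : Module.finrank ℝ E = k) (F : Submodule ℝ Y)
    (_ : Module.finrank ℝ F = k) (_ : ∀ x ∈ E, T x ∈ F)
    (e : F ≃ₗ[ℝ] EuclideanSpace ℝ (Fin k)),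
    volume (⇑e '' {y : F | ∃ x ∈ E, ‖x‖ ≤ 1 ∧ T x = (y : Y)}) /
      volume (⇑e '' {y : F | ‖(y : Y)‖ ≤ 1})

/-- The gaussian ideal norm `ℓ(u)` for `u : ℓ_2 → X`. -/
def ellNormE {X : Type*} [NormedAddCommGroup X] [NormedSpace ℝ X]
    (u : lp (fun _ : ℕ => ℝ) 2 →L[ℝ] X) : ℝ≥0∞ :=
  ⨆ n : ℕ, ENNReal.ofReal
    ((∫ ω, ‖∑ k : Fin n, ω k • u (lp.single 2 (k : ℕ) 1)‖ ^ 2 ∂gaussPi n) ^ (1/2 : ℝ))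

/-- A convex body: convex, symmetric, compact with non-empty interior. -/
def IsConvexBody {n : ℕ} (K : Set (EuclideanSpace ℝ (Fin n))) : Prop :=
  Convex ℝ K ∧ IsCompact K ∧ (∀ x ∈ K, -x ∈ K) ∧ (interior K).Nonempty

/-- `Y` is K-convex: the gaussian projections are uniformly bounded on `L_2(Y)`. -/
def IsKConvex (Y : Type*) [NormedAddCommGroup Y] [NormedSpace ℝ Y] : Prop :=
  ∃ C : ℝ, 0 < C ∧ ∀ (n : ℕ) (f : (Fin n → ℝ) → Y), MemLp f 2 (gaussPi n) →
    (∫ ω, ‖∑ k, ω k • (∫ ω', ω' k • f ω' ∂gaussPi n)‖ ^ 2 ∂gaussPi n) ≤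
      C ^ 2 * ∫ ω, ‖f ω‖ ^ 2 ∂gaussPi n

/-- `c₀` is a constant for Kahane's inequality (for gaussian averages). -/
def KahaneConst (c₀ : ℝ) : Prop :=
  ∀ (Z : Type) [NormedAddCommGroup Z] [NormedSpace ℝ Z], ∀ (r : ℝ), 1 ≤ r →
    ∀ (n : ℕ) (x : Fin n → Z),
      (∫ ω, ‖∑ k, ω k • x k‖ ^ r ∂gaussPi n) ^ (1/r) ≤
        c₀ * Real.sqrt r * ∫ ω, ‖∑ k, ω k • x k‖ ∂gaussPi n

/-- The set whose lattice supremum is the Krivine element `(∑ |x_k|^p)^{1/p}`. -/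
def krivineSet (p : ℝ≥0∞) {Y : Type*} [NormedAddCommGroup Y] [Lattice Y] [IsOrderedAddMonoid Y] [HasSolidNorm Y] [NormedSpace ℝ Y]
    {n : ℕ} (x : Fin n → Y) : Set Y :=
  {z | ∃ a : Fin n → ℝ, lpNormF (conjE p) a ≤ 1 ∧ z = ∑ k, a k • x k}

/-- `Y` is `p`-convex with constant `C` (via the Krivine calculus element
`(∑ |x_k|^p)^{1/p} = sup { ∑ a_k x_k : ‖a‖_{p'} ≤ 1 }`). -/
def PConvexWith (p : ℝ≥0∞) (C : ℝ) (Y : Type*) [NormedAddCommGroup Y] [Lattice Y] [IsOrderedAddMonoid Y] [HasSolidNorm Y]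
    [NormedSpace ℝ Y] : Prop :=
  ∀ (n : ℕ) (x : Fin n → Y) (u : Y), IsLUB (krivineSet p x) u →
    ‖u‖ ≤ C * lpNormF p (fun k => ‖x k‖)

/-- `Y` is `q`-concave with constant `C`. -/
def QConcaveWith (q : ℝ≥0∞) (C : ℝ) (Y : Type*) [NormedAddCommGroup Y] [Lattice Y] [IsOrderedAddMonoid Y] [HasSolidNorm Y]
    [NormedSpace ℝ Y] : Prop :=
  ∀ (n : ℕ) (x : Fin n → Y) (u : Y), IsLUB (krivineSet q x) u →
    lpNormF q (fun k => ‖x k‖) ≤ C * ‖u‖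

/-- A Banach operator ideal `(𝒜, α)`. -/
structure BanachIdeal where
  mem : ∀ (X Y : Type) [NormedAddCommGroup X] [NormedSpace ℝ X]
    [NormedAddCommGroup Y] [NormedSpace ℝ Y], (X →L[ℝ] Y) → Prop
  α : ∀ (X Y : Type) [NormedAddCommGroup X] [NormedSpace ℝ X]
    [NormedAddCommGroup Y] [NormedSpace ℝ Y], (X →L[ℝ] Y) → ℝ
  opNorm_le_α : ∀ (X Y : Type) [NormedAddCommGroup X] [NormedSpace ℝ X]
    [NormedAddCommGroup Y] [NormedSpace ℝ Y] (T : X →L[ℝ] Y),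
    mem X Y T → ‖T‖ ≤ α X Y T
  rankOne_mem : ∀ (X Y : Type) [NormedAddCommGroup X] [NormedSpace ℝ X]
    [NormedAddCommGroup Y] [NormedSpace ℝ Y] (f : X →L[ℝ] ℝ) (y : Y),
    mem X Y (f.smulRight y) ∧ α X Y (f.smulRight y) = ‖f‖ * ‖y‖
  ideal : ∀ (X₀ X Y Y₀ : Type) [NormedAddCommGroup X₀] [NormedSpace ℝ X₀]
    [NormedAddCommGroup X] [NormedSpace ℝ X] [NormedAddCommGroup Y] [NormedSpace ℝ Y]
    [NormedAddCommGroup Y₀] [NormedSpace ℝ Y₀]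
    (R : X₀ →L[ℝ] X) (T : X →L[ℝ] Y) (S : Y →L[ℝ] Y₀), mem X Y T →
      mem X₀ Y₀ ((S.comp T).comp R) ∧ α X₀ Y₀ ((S.comp T).comp R) ≤ ‖S‖ * α X Y T * ‖R‖

/-- `S_p(Y)`: the closure in `L_p(μ; Y)` of the span of elementary tensors `f ⊗ y`, `f ∈ S_p`. -/
def tensorSpan (p : ℝ≥0∞) (hp : 1 ≤ p) {Ω : Type*} [MeasurableSpace Ω] {μ : Measure Ω}
    (Sp : Submodule ℝ (Lp ℝ p μ)) (Y : Type*) [NormedAddCommGroup Y] [NormedSpace ℝ Y] :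
    Submodule ℝ (Lp Y p μ) :=
  letI : Fact (1 ≤ p) := ⟨hp⟩
  (Submodule.span ℝ {g : Lp Y p μ | ∃ f ∈ Sp, ∃ y : Y, g = tensorLp p f y}).topologicalClosure

theorem tensorLp_mem_tensorSpan (p : ℝ≥0∞) (hp : 1 ≤ p) {Ω : Type*} [MeasurableSpace Ω]
    {μ : Measure Ω} {Sp : Submodule ℝ (Lp ℝ p μ)} (Y : Type*) [NormedAddCommGroup Y]
    [NormedSpace ℝ Y] {f : Lp ℝ p μ} (hf : f ∈ Sp) (y : Y) :
    tensorLp p f y ∈ tensorSpan p hp Sp Y := by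
  letI : Fact (1 ≤ p) := ⟨hp⟩
  unfold tensorSpan
  exact Submodule.le_topologicalClosure _ (Submodule.subset_span ⟨f, hf, y, rfl⟩)

/-- Condition (ii) of Theorem 3: every operator `T : L_p → L_s` extends to
`T ⊗ Id_X : L_p(X) → L_s(X)` with norm at most `c ‖T‖`. -/
def FubiniType (X : Type*) [NormedAddCommGroup X] [NormedSpace ℝ X] (p s : ℝ≥0∞)
    (hp : 1 ≤ p) (hs : 1 ≤ s) (c : ℝ) : Prop :=
  letI : Fact (1 ≤ p) := ⟨hp⟩
  letI : Fact (1 ≤ s) := ⟨hs⟩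
  ∀ (Ω₁ : Type) [MeasurableSpace Ω₁], ∀ (μ : Measure Ω₁),
  ∀ (Ω₂ : Type) [MeasurableSpace Ω₂], ∀ (ν : Measure Ω₂),
  ∀ (T : Lp ℝ p μ →L[ℝ] Lp ℝ s ν),
    ∃ U : Lp X p μ →L[ℝ] Lp X s ν,
      (∀ (f : Lp ℝ p μ) (x : X), U (tensorLp p f x) = tensorLp s (T f) x) ∧ ‖U‖ ≤ c * ‖T‖

/-- The `L_p`-section property with constant `c`: the unit ball of every finite dimensional
subspace is contained in an `L_p`-section of comparable volume. -/
def LpSectionPropertyWith (p : ℝ≥0∞) (hp : 1 ≤ p) (X : Type*) [NormedAddCommGroup X]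
    [NormedSpace ℝ X] (c : ℝ) : Prop :=
  ∀ (n : ℕ) (F : Submodule ℝ X), Module.finrank ℝ F = n →
    ∀ e : F ≃ₗ[ℝ] EuclideanSpace ℝ (Fin n),
      ∃ S : Set (EuclideanSpace ℝ (Fin n)), IsLpSection p hp S ∧
        ⇑e '' Metric.closedBall 0 1 ⊆ S ∧
        (volume S / volume (⇑e '' Metric.closedBall 0 1)) ^ ((n : ℝ)⁻¹) ≤ ENNReal.ofReal c

/-- The coordinate subspace `H_A = span{e_i : i ∉ A}` of `ℝ^n`. -/
def coordSubspace {n : ℕ} (A : Finset (Fin n)) : Submodule ℝ (EuclideanSpace ℝ (Fin n)) where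
  carrier := {x | ∀ i ∈ A, x i = 0}
  add_mem' := by
    intro a b ha hb i hi
    simp [PiLp.add_apply, ha i hi, hb i hi]
  zero_mem' := by intro i _; simp
  smul_mem' := by
    intro c a ha i hi
    simp [PiLp.smul_apply, ha i hi]

/-- `K` (of volume 1) is in isotropic position with isotropy constant `L`. -/
def IsIsotropicWith {n : ℕ} (K : Set (EuclideanSpace ℝ (Fin n))) (L : ℝ) : Prop :=
  0 ≤ L ∧ volume K = 1 ∧ ∀ θ : EuclideanSpace ℝ (Fin n),
    (∫ x in K, (∑ i, x i * θ i) ^ 2) = L ^ 2 * ∑ i, (θ i) ^ 2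

end


section AuxGaussProj

open MeasureTheory ENNReal Real Set ProbabilityTheory Filter

noncomputable section

namespace GaussProjAux

lemma integrable_abs_rpow_mul_exp {b : ℝ} (hb : 0 < b) {t : ℝ} (ht : -1 < t) :
    Integrable fun x : ℝ => |x| ^ t * Real.exp (-b * x ^ 2) := by
  have hIoi : IntegrableOn (fun x : ℝ => |x| ^ t * Real.exp (-b * x ^ 2)) (Ioi 0) := by
    refine (integrableOn_rpow_mul_exp_neg_mul_sq hb ht).congr_fun ?_ measurableSet_Ioi
    intro x hx
    simp only [abs_of_pos (α := ℝ) hx]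
  rw [← integrableOn_univ, ← @Iio_union_Ici _ _ (0 : ℝ), integrableOn_union]
  constructor
  · rw [← (Measure.measurePreserving_neg (volume : Measure ℝ)).integrableOn_comp_preimage
        (Homeomorph.neg ℝ).measurableEmbedding]
    simp only [Function.comp_def, abs_neg, neg_sq, neg_preimage, neg_Iio, neg_neg, neg_zero]
    exact hIoi
  · rw [integrableOn_Ici_iff_integrableOn_Ioi]
    exact hIoi

lemma memLp_gaussian {r : ℝ≥0∞} (hr1 : 1 ≤ r) (hrtop : r ≠ ∞) :
    MemLp (id : ℝ → ℝ) r (gaussianReal 0 1) := by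
  have hr0 : r ≠ 0 := by positivity
  have ht0 : 0 < r.toReal := ENNReal.toReal_pos hr0 hrtop
  refine ⟨aestronglyMeasurable_id, ?_⟩
  rw [eLpNorm_eq_lintegral_rpow_enorm_toReal hr0 hrtop]
  refine ENNReal.rpow_lt_top_of_nonneg (by positivity) ?_
  rw [gaussianReal_of_var_ne_zero 0 one_ne_zero,
    lintegral_withDensity_eq_lintegral_mul _ (measurable_gaussianPDF 0 1)
      (by fun_prop)]
  have hint : Integrable (fun x : ℝ =>
      gaussianPDFReal 0 1 x * |x| ^ r.toReal) volume := by
    have h1 : Integrable (fun x : ℝ => |x| ^ r.toReal * Real.exp (-(2 : ℝ)⁻¹ * x ^ 2)) :=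
      integrable_abs_rpow_mul_exp (by norm_num) (by linarith)
    refine (h1.const_mul ((Real.sqrt (2 * Real.pi))⁻¹)).congr
      (Filter.Eventually.of_forall fun x => ?_)
    unfold gaussianPDFReal
    push_cast
    ring_nf
  have heq : ∫⁻ x, (gaussianPDF 0 1 * fun x : ℝ => ‖id x‖ₑ ^ r.toReal) x ∂volume
      = ∫⁻ x, ENNReal.ofReal (gaussianPDFReal 0 1 x * |x| ^ r.toReal) ∂volume := by
    refine lintegral_congr fun x => ?_
    simp only [Pi.mul_apply, gaussianPDF, id]
    rw [← ofReal_norm, Real.norm_eq_abs,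
      ENNReal.ofReal_rpow_of_nonneg (abs_nonneg x) ht0.le,
      ← ENNReal.ofReal_mul (gaussianPDFReal_nonneg 0 1 x)]
  rw [heq]
  exact hint.lintegral_lt_top.ne

lemma conj_facts {a : ℝ≥0∞} (ha1 : 1 < a) (hatop : a ≠ ∞) :
    1 / a + 1 / ENNReal.ofReal (a.toReal / (a.toReal - 1)) = 1 ∧
    (ENNReal.ofReal (a.toReal / (a.toReal - 1))).toReal = a.toReal / (a.toReal - 1) ∧
    1 ≤ ENNReal.ofReal (a.toReal / (a.toReal - 1)) ∧
    ENNReal.ofReal (a.toReal / (a.toReal - 1)) ≠ ∞ := by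
  have hat : 1 < a.toReal := by
    have := (ENNReal.toReal_lt_toReal one_ne_top hatop).mpr ha1
    simpa using this
  set x := a.toReal / (a.toReal - 1) with hxdef
  have hx1 : 1 ≤ x := by
    rw [hxdef, le_div_iff₀ (by linarith)]; linarith
  have hx0 : 0 < x := lt_of_lt_of_le one_pos hx1
  have hxtoReal : (ENNReal.ofReal x).toReal = x := ENNReal.toReal_ofReal hx0.le
  refine ⟨?_, hxtoReal, ?_, ofReal_ne_top⟩
  · conv_lhs => rw [← ENNReal.ofReal_toReal hatop]
    rw [one_div, one_div, ← ENNReal.ofReal_inv_of_pos (by linarith),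
      ← ENNReal.ofReal_inv_of_pos hx0,
      ← ENNReal.ofReal_add (by positivity) (by positivity), ← ENNReal.ofReal_one]
    congr 1
    rw [hxdef]
    have h1 : a.toReal ≠ 0 := by linarith
    have h2 : a.toReal - 1 ≠ 0 := by linarith
    field_simp
    ring
  · rw [← ENNReal.ofReal_one]
    exact ENNReal.ofReal_le_ofReal hx1

lemma pairing {Ω : Type} [MeasurableSpace Ω] (P : Measure Ω) {a b : ℝ≥0∞}
    (hab : 1 / 1 = 1 / b + 1 / a) {F G : Ω → ℝ} (hF : MemLp F a P) (hG : MemLp G b P) :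
    Integrable (fun ω => F ω * G ω) P ∧
    |∫ ω, F ω * G ω ∂P| ≤ (eLpNorm F a P).toReal * (eLpNorm G b P).toReal := by
  have hmem : MemLp (G • F) 1 P := by
    haveI : ENNReal.HolderTriple b a 1 := ⟨by simpa [one_div] using hab.symm⟩; exact hF.smul hG
  have hfun : (G • F) = fun ω => F ω * G ω := by funext ω; simp [Pi.smul_apply, mul_comm]
  have hint : Integrable (fun ω => F ω * G ω) P := by
    rw [← hfun]; exact memLp_one_iff_integrable.mp hmem
  refine ⟨hint, ?_⟩
  calc |∫ ω, F ω * G ω ∂P| ≤ ∫ ω, ‖F ω * G ω‖ ∂P := by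
        rw [← Real.norm_eq_abs]; exact norm_integral_le_integral_norm _
    _ = (eLpNorm (fun ω => F ω * G ω) 1 P).toReal := by
        rw [integral_norm_eq_lintegral_enorm hint.1, eLpNorm_one_eq_lintegral_enorm]
    _ ≤ ((eLpNorm G b P) * (eLpNorm F a P)).toReal := by
        refine ENNReal.toReal_mono (ENNReal.mul_ne_top hG.2.ne hF.2.ne) ?_
        rw [← hfun]; haveI : ENNReal.HolderTriple b a 1 := ⟨by simpa [one_div] using hab.symm⟩; exact eLpNorm_smul_le_mul_eLpNorm hF.1 hG.1
    _ = _ := by rw [ENNReal.toReal_mul]; ring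

variable {Ω : Type} [MeasurableSpace Ω] (P : Measure Ω) [IsProbabilityMeasure P]
    (g : ℕ → Ω → ℝ) (hmeas : ∀ k, Measurable (g k))
    (hindep : ProbabilityTheory.iIndepFun g P)
    (hgauss : ∀ k, Measure.map (g k) P = ProbabilityTheory.gaussianReal 0 1)

include hmeas hindep hgauss

lemma joint_law (n : ℕ) :
    Measure.map (fun ω (k : Fin n) => g k ω) P = gaussPi n := by
  have hT : Measurable (fun ω (k : Fin n) => g k ω) :=
    measurable_pi_lambda _ fun k => hmeas k
  refine (Measure.pi_eq (μ := fun _ : Fin n => gaussianReal 0 1) fun s hs => ?_).symm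
  rw [Measure.map_apply hT (MeasurableSet.univ_pi hs)]
  set s' : ℕ → Set Ω := fun j => if h : j < n then g j ⁻¹' s ⟨j, h⟩ else Set.univ with hs'
  have hpre : (fun ω (k : Fin n) => g k ω) ⁻¹' (Set.univ.pi s) = ⋂ j ∈ Finset.range n, s' j := by
    ext ω
    simp only [Set.mem_preimage, Set.mem_univ_pi, Set.mem_iInter, Finset.mem_range, hs']
    constructor
    · intro h j hj; rw [dif_pos hj]; exact h ⟨j, hj⟩
    · intro h k
      have := h k k.isLt
      rwa [dif_pos k.isLt] at this
  rw [hpre, hindep.meas_biInter (fun j hj => ?_)]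
  · rw [← Fin.prod_univ_eq_prod_range (fun j => P (s' j)) n]
    refine Finset.prod_congr rfl fun k _ => ?_
    have hk : (k : ℕ) < n := k.isLt
    rw [hs']
    simp only [dif_pos hk]
    rw [← Measure.map_apply (hmeas k) (hs _), hgauss]
  · rw [Finset.mem_range] at hj
    exact ⟨s ⟨j, hj⟩, hs _, by rw [hs']; simp only [dif_pos hj]⟩

omit hindep hgauss in
include hmeas in
lemma gmeas_sum (t : Finset ℕ) (c : ℕ → ℝ) :
    Measurable (fun ω => ∑ k ∈ t, c k * g k ω) :=
  Finset.measurable_sum _ fun k _ => (hmeas k).const_mul _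

omit hindep in
lemma gmem {r : ℝ≥0∞} (hr1 : 1 ≤ r) (hrtop : r ≠ ∞) (k : ℕ) : MemLp (g k) r P := by
  refine ⟨(hmeas k).aestronglyMeasurable, ?_⟩
  have h : eLpNorm (g k) r P = eLpNorm (id : ℝ → ℝ) r (gaussianReal 0 1) := by
    rw [← hgauss k, eLpNorm_map_measure aestronglyMeasurable_id (hmeas k).aemeasurable]
    rfl
  rw [h]
  exact (memLp_gaussian hr1 hrtop).2

omit hindep in
lemma gsum_mem {r : ℝ≥0∞} (hr1 : 1 ≤ r) (hrtop : r ≠ ∞) (t : Finset ℕ) (c : ℕ → ℝ) :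
    MemLp (fun ω => ∑ k ∈ t, c k * g k ω) r P :=
  memLp_finset_sum t fun k _ => (gmem P g hmeas hgauss hr1 hrtop k).const_mul (c k)

lemma core {c₀ : ℝ} (hKahane : KahaneConst c₀)
    {r : ℝ≥0∞} (hr1 : 1 ≤ r) (hrtop : r ≠ ∞) (t : Finset ℕ) (c : ℕ → ℝ) :
    eLpNorm (fun ω => ∑ k ∈ t, c k * g k ω) r P
      ≤ ENNReal.ofReal (c₀ * Real.sqrt r.toReal)
          * eLpNorm (fun ω => ∑ k ∈ t, c k * g k ω) 2 P := by
  classical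
  have hr0 : r ≠ 0 := by positivity
  have hrt1 : 1 ≤ r.toReal := by
    rw [← ENNReal.toReal_one]
    exact ENNReal.toReal_mono hrtop hr1
  set n := (t.sup id) + 1 with hn
  have htn : ∀ k ∈ t, k < n := fun k hk =>
    Nat.lt_succ_of_le (Finset.le_sup (f := id) hk)
  set b : ℕ → ℝ := fun k => if k ∈ t then c k else 0 with hb
  have hsum : (fun ω => ∑ k ∈ t, c k * g k ω)
      = fun ω => ∑ k : Fin n, b k * g k ω := by
    funext ω
    rw [Fin.sum_univ_eq_sum_range (fun k => b k * g k ω) n]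
    calc ∑ k ∈ t, c k * g k ω = ∑ k ∈ t, b k * g k ω :=
          Finset.sum_congr rfl fun k hk => by rw [hb]; simp only [if_pos hk]
      _ = ∑ k ∈ Finset.range n, b k * g k ω := by
          refine Finset.sum_subset (fun k hk => Finset.mem_range.mpr (htn k hk))
            (fun k _ hk => ?_)
          rw [hb]; simp only [if_neg hk, zero_mul]
  set T : Ω → (Fin n → ℝ) := fun ω k => g k ω with hT
  have hTmeas : Measurable T := measurable_pi_lambda _ fun k => hmeas k
  set w : (Fin n → ℝ) → ℝ := fun v => ∑ k : Fin n, b k * v k with hw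
  have hwmeas : Measurable w :=
    Finset.measurable_sum _ fun k _ => (measurable_pi_apply k).const_mul _
  have hlaw : Measure.map T P = gaussPi n := joint_law P g hmeas hindep hgauss n
  have hcomp : (fun ω => ∑ k : Fin n, b k * g k ω) = w ∘ T := rfl
  have hmapr : ∀ r' : ℝ≥0∞, eLpNorm (w ∘ T) r' P = eLpNorm w r' (gaussPi n) := fun r' => by
    rw [← hlaw, eLpNorm_map_measure hwmeas.aestronglyMeasurable hTmeas.aemeasurable]
  have hwm : ∀ r' : ℝ≥0∞, 1 ≤ r' → r' ≠ ∞ → MemLp w r' (gaussPi n) := by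
    intro r' h1 h2
    rw [← hlaw, memLp_map_measure_iff hwmeas.aestronglyMeasurable hTmeas.aemeasurable]
    have : MemLp (fun ω => ∑ k ∈ Finset.univ (α := Fin n), b ↑k * g ↑k ω) r' P :=
      memLp_finset_sum _ fun k _ => (gmem P g hmeas hgauss h1 h2 ↑k).const_mul _
    exact this
  haveI : IsProbabilityMeasure (gaussPi n) := by
    unfold gaussPi; infer_instance
  rw [hsum, hcomp, hmapr r, hmapr 2]
  -- now everything on the Gaussian side
  have hK := hKahane ℝ r.toReal hrt1 n (fun k => b ↑k)
  have hwv : ∀ v : Fin n → ℝ, (∑ k : Fin n, v k • b ↑k) = w v := fun v =>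
    Finset.sum_congr rfl fun k _ => by rw [smul_eq_mul, mul_comm]
  simp only [hwv] at hK
  have h2 : eLpNorm w r (gaussPi n)
      = ENNReal.ofReal ((∫ v, ‖w v‖ ^ r.toReal ∂gaussPi n) ^ (1 / r.toReal)) := by
    rw [(hwm r hr1 hrtop).eLpNorm_eq_integral_rpow_norm hr0 hrtop, one_div]
  have h1 : (eLpNorm w 1 (gaussPi n)).toReal = ∫ v, ‖w v‖ ∂gaussPi n := by
    rw [(hwm 1 le_rfl one_ne_top).eLpNorm_eq_integral_rpow_norm one_ne_zero one_ne_top]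
    simp only [ENNReal.toReal_one, Real.rpow_one, inv_one]
    exact ENNReal.toReal_ofReal (integral_nonneg fun v => norm_nonneg _)
  have hnorm_abs : ∀ v : Fin n → ℝ, ‖w v‖ = |w v| := fun v => Real.norm_eq_abs _
  calc eLpNorm w r (gaussPi n)
      = ENNReal.ofReal ((∫ v, ‖w v‖ ^ r.toReal ∂gaussPi n) ^ (1 / r.toReal)) := h2
    _ ≤ ENNReal.ofReal (c₀ * Real.sqrt r.toReal * ∫ v, ‖w v‖ ∂gaussPi n) :=
        ENNReal.ofReal_le_ofReal hK
    _ = ENNReal.ofReal (c₀ * Real.sqrt r.toReal) * ENNReal.ofReal (∫ v, ‖w v‖ ∂gaussPi n) := by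
        rw [ENNReal.ofReal_mul']
        exact integral_nonneg fun v => norm_nonneg _
    _ = ENNReal.ofReal (c₀ * Real.sqrt r.toReal) * eLpNorm w 1 (gaussPi n) := by
        rw [← h1, ENNReal.ofReal_toReal (hwm 1 le_rfl one_ne_top).2.ne]
    _ ≤ ENNReal.ofReal (c₀ * Real.sqrt r.toReal) * eLpNorm w 2 (gaussPi n) := by
        gcongr
        exact eLpNorm_le_eLpNorm_of_exponent_le (by norm_num) (hwm 2 one_le_two ENNReal.ofNat_ne_top).1

end GaussProjAux

end

end AuxGaussProj

set_option maxHeartbeats 1000000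

theorem gaussian_projection_gamma2 (c₀ : ℝ) (hc₀ : 0 < c₀) (hKahane : KahaneConst c₀)
    (p s : ℝ≥0∞) (hp1 : 1 < p) (hp2 : p ≤ 2) (hs1 : 2 ≤ s) (hs2 : s ≠ ∞)
    (Ω : Type) [MeasurableSpace Ω] (P : Measure Ω) [IsProbabilityMeasure P]
    (g : ℕ → Ω → ℝ) (hmeas : ∀ k, Measurable (g k))
    (hindep : ProbabilityTheory.iIndepFun g P)
    (hgauss : ∀ k, Measure.map (g k) P = ProbabilityTheory.gaussianReal 0 1)
    (hgmem : ∀ k, MemLp (g k) s P) :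
    letI : Fact (1 ≤ p) := ⟨hp1.le⟩
    letI : Fact (1 ≤ s) := ⟨le_trans one_le_two hs1⟩
    ∃ Proj : Lp ℝ p P →L[ℝ] Lp ℝ s P,
      (∀ (f : Lp ℝ p P) (k : ℕ),
        ∫ ω, (Proj f : Ω → ℝ) ω * g k ω ∂P = ∫ ω, (f : Ω → ℝ) ω * g k ω ∂P) ∧
      (∀ f : Lp ℝ p P, Proj f ∈
        (Submodule.span ℝ (Set.range fun k => ((hgmem k).toLp (g k)))).topologicalClosure) ∧
      gammaE 2 one_le_two Proj ≤
        ENNReal.ofReal (c₀ ^ 2 * Real.sqrt (s.toReal * (p.toReal / (p.toReal - 1)))) := by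
  classical
  letI : Fact (1 ≤ p) := ⟨hp1.le⟩
  letI : Fact (1 ≤ s) := ⟨le_trans one_le_two hs1⟩
  -- basic exponent facts
  have hptop : p ≠ ∞ := (lt_of_le_of_lt hp2 (by norm_num)).ne
  have hs1' : (1 : ℝ≥0∞) < s := lt_of_lt_of_le one_lt_two hs1
  have hsle : (1 : ℝ≥0∞) ≤ s := hs1'.le
  obtain ⟨hpq, hqt, hq1, hqtop⟩ := GaussProjAux.conj_facts hp1 hptop
  obtain ⟨hss', hs't, hs'1, hs'top⟩ := GaussProjAux.conj_facts hs1' hs2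
  set q := ENNReal.ofReal (p.toReal / (p.toReal - 1)) with hqdef
  set s' := ENNReal.ofReal (s.toReal / (s.toReal - 1)) with hs'def
  have hqt1 : 1 ≤ q.toReal := by
    rw [← ENNReal.toReal_one]; exact ENNReal.toReal_mono hqtop hq1
  have hst1 : 1 ≤ s.toReal := by
    rw [← ENNReal.toReal_one]; exact ENNReal.toReal_mono hs2 hsle
  have hab_p : (1 : ℝ≥0∞) / 1 = 1 / q + 1 / p := by
    have h11 : (1 : ℝ≥0∞) / 1 = 1 := by norm_num
    rw [h11, add_comm]; exact hpq.symm
  have hab_s : (1 : ℝ≥0∞) / 1 = 1 / s' + 1 / s := by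
    have h11 : (1 : ℝ≥0∞) / 1 = 1 := by norm_num
    rw [h11, add_comm]; exact hss'.symm
  -- the generating Gaussians in L²
  have gmem2 : ∀ k, MemLp (g k) 2 P :=
    GaussProjAux.gmem P g hmeas hgauss one_le_two ENNReal.ofNat_ne_top
  set G2 : ℕ → Lp ℝ 2 P := fun k => (gmem2 k).toLp (g k) with hG2
  set M := Submodule.span ℝ (Set.range G2) with hMdef
  set E := M.topologicalClosure with hEdef
  haveI hEcomp : CompleteSpace E := (Submodule.isClosed_topologicalClosure M).completeSpace_coe
  -- coercion of finite sums
  have hcoesum : ∀ (t : Finset ℕ) (c : ℕ → ℝ),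
      ((∑ k ∈ t, c k • G2 k : Lp ℝ 2 P) : Ω → ℝ) =ᵐ[P] fun ω => ∑ k ∈ t, c k * g k ω := by
    intro t
    induction t using Finset.induction_on with
    | empty =>
      intro c
      simp only [Finset.sum_empty]
      filter_upwards [Lp.coeFn_zero ℝ 2 P] with ω h using h
    | insert _ _ ha ih =>
      rename_i a t
      intro c
      filter_upwards [Lp.coeFn_add (c a • G2 a) (∑ k ∈ t, c k • G2 k),
        Lp.coeFn_smul (c a) (G2 a), (gmem2 a).coeFn_toLp, ih c] with ω e1 e2 e3 e4
      rw [Finset.sum_insert ha, Finset.sum_insert ha, e1, Pi.add_apply, e2, Pi.smul_apply,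
        e4, e3, smul_eq_mul]
  -- every element of M is a.e. a finite Gaussian combination
  have hrep : ∀ u : ↥M, ∃ (t : Finset ℕ) (c : ℕ → ℝ),
      (((u : Lp ℝ 2 P) : Ω → ℝ)) =ᵐ[P] fun ω => ∑ k ∈ t, c k * g k ω := by
    intro u
    obtain ⟨c, hc⟩ := Finsupp.mem_span_range_iff_exists_finsupp.mp u.2
    refine ⟨c.support, fun k => c k, ?_⟩
    rw [← hc, Finsupp.sum]
    exact hcoesum c.support fun k => c k
  -- the key norm estimates on M
  have hrq : ∀ (r : ℝ≥0∞), 1 ≤ r → r ≠ ∞ → ∀ u : ↥M,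
      MemLp ((u : Lp ℝ 2 P) : Ω → ℝ) r P ∧
      (eLpNorm ((u : Lp ℝ 2 P) : Ω → ℝ) r P).toReal ≤ c₀ * Real.sqrt r.toReal * ‖u‖ := by
    intro r h1 h2 u
    obtain ⟨t, c, hae⟩ := hrep u
    have hmem : MemLp ((u : Lp ℝ 2 P) : Ω → ℝ) r P :=
      (memLp_congr_ae hae).mpr (GaussProjAux.gsum_mem P g hmeas hgauss h1 h2 t c)
    refine ⟨hmem, ?_⟩
    have hcore := GaussProjAux.core P g hmeas hindep hgauss hKahane h1 h2 t c
    have hrnorm : eLpNorm ((u : Lp ℝ 2 P) : Ω → ℝ) r P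
        = eLpNorm (fun ω => ∑ k ∈ t, c k * g k ω) r P := eLpNorm_congr_ae hae
    have h2norm : eLpNorm ((u : Lp ℝ 2 P) : Ω → ℝ) 2 P
        = eLpNorm (fun ω => ∑ k ∈ t, c k * g k ω) 2 P := eLpNorm_congr_ae hae
    have hufin : ‖u‖ = (eLpNorm ((u : Lp ℝ 2 P) : Ω → ℝ) 2 P).toReal := Lp.norm_def _
    have hmem2 : MemLp ((u : Lp ℝ 2 P) : Ω → ℝ) 2 P := Lp.memLp _
    calc (eLpNorm ((u : Lp ℝ 2 P) : Ω → ℝ) r P).toReal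
        ≤ (ENNReal.ofReal (c₀ * Real.sqrt r.toReal)
            * eLpNorm ((u : Lp ℝ 2 P) : Ω → ℝ) 2 P).toReal := by
          refine ENNReal.toReal_mono ?_ ?_
          · exact ENNReal.mul_ne_top ENNReal.ofReal_ne_top hmem2.2.ne
          · rw [hrnorm, h2norm]; exact hcore
      _ = c₀ * Real.sqrt r.toReal * (eLpNorm ((u : Lp ℝ 2 P) : Ω → ℝ) 2 P).toReal := by
          rw [ENNReal.toReal_mul, ENNReal.toReal_ofReal (by positivity)]
      _ = c₀ * Real.sqrt r.toReal * ‖u‖ := by rw [← hufin]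
  -- the inclusion M → E
  have hMleE : M ≤ E := Submodule.le_topologicalClosure M
  let elin : ↥M →ₗ[ℝ] ↥E := Submodule.inclusion hMleE
  have helin : ∀ u : ↥M, ‖elin u‖ = ‖u‖ := fun u => rfl
  let e : ↥M →L[ℝ] ↥E := elin.mkContinuous 1 (fun u => by rw [helin, one_mul])
  have he : ∀ u : ↥M, ((e u : Lp ℝ 2 P)) = (u : Lp ℝ 2 P) := fun u => rfl
  have hednorm : ∀ u : ↥M, ‖u‖ ≤ ((1 : NNReal) : ℝ) * ‖e u‖ := fun u => by
    rw [NNReal.coe_one, one_mul]; exact le_of_eq rfl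
  have hui : IsUniformInducing e :=
    (ContinuousLinearMap.isUniformEmbedding_of_bound e hednorm).isUniformInducing
  have hdense : DenseRange e := by
    intro y
    have hy : (y : Lp ℝ 2 P) ∈ closure (M : Set (Lp ℝ 2 P)) := by
      rw [← Submodule.topologicalClosure_coe]; exact y.2
    refine closure_subtype.mpr ?_
    have himg : (Subtype.val '' Set.range e) = (M : Set (Lp ℝ 2 P)) := by
      ext z
      constructor
      · rintro ⟨v, ⟨u, rfl⟩, rfl⟩
        exact u.2
      · intro hz
        exact ⟨e ⟨z, hz⟩, ⟨⟨z, hz⟩, rfl⟩, rfl⟩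
    rw [himg]
    exact hy
  -- the operator T0 : M → L_s
  let T0lin : ↥M →ₗ[ℝ] Lp ℝ s P :=
    { toFun := fun u => ((hrq s hsle hs2 u).1).toLp _
      map_add' := by
        intro u v
        refine Lp.ext ?_
        filter_upwards [((hrq s hsle hs2 (u + v)).1).coeFn_toLp,
          ((hrq s hsle hs2 u).1).coeFn_toLp, ((hrq s hsle hs2 v).1).coeFn_toLp,
          Lp.coeFn_add (((hrq s hsle hs2 u).1).toLp _) (((hrq s hsle hs2 v).1).toLp _),
          Lp.coeFn_add ((u : Lp ℝ 2 P)) ((v : Lp ℝ 2 P))] with ω e1 e2 e3 e4 e5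
        rw [e1, e4, Pi.add_apply, e2, e3]
        have : ((↑(u + v) : Lp ℝ 2 P) : Ω → ℝ) ω = (((u : Lp ℝ 2 P) + (v : Lp ℝ 2 P) : Lp ℝ 2 P) : Ω → ℝ) ω := rfl
        rw [this, e5, Pi.add_apply]
      map_smul' := by
        intro a u
        refine Lp.ext ?_
        filter_upwards [((hrq s hsle hs2 (a • u)).1).coeFn_toLp,
          ((hrq s hsle hs2 u).1).coeFn_toLp,
          Lp.coeFn_smul a (((hrq s hsle hs2 u).1).toLp _),
          Lp.coeFn_smul a ((u : Lp ℝ 2 P))] with ω e1 e2 e3 e4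
        rw [e1, RingHom.id_apply, e3, Pi.smul_apply, e2]
        have : ((↑(a • u) : Lp ℝ 2 P) : Ω → ℝ) ω = ((a • (u : Lp ℝ 2 P) : Lp ℝ 2 P) : Ω → ℝ) ω := rfl
        rw [this, e4, Pi.smul_apply] }
  have hT0b : ∀ u : ↥M, ‖T0lin u‖ ≤ (c₀ * Real.sqrt s.toReal) * ‖u‖ := by
    intro u
    have h1 : ‖T0lin u‖ = (eLpNorm ((u : Lp ℝ 2 P) : Ω → ℝ) s P).toReal :=
      Lp.norm_toLp (((u : Lp ℝ 2 P)) : Ω → ℝ) ((hrq s hsle hs2 u).1)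
    rw [h1]
    exact (hrq s hsle hs2 u).2
  let T0 : ↥M →L[ℝ] Lp ℝ s P := T0lin.mkContinuous (c₀ * Real.sqrt s.toReal) hT0b
  have hT0app : ∀ u : ↥M, T0 u = ((hrq s hsle hs2 u).1).toLp _ := fun u => rfl
  -- extend to E
  let A : ↥E →L[ℝ] Lp ℝ s P := T0.extend e
  have hA : ∀ u : ↥M, A (e u) = T0 u := fun u => ContinuousLinearMap.extend_eq _ hdense hui _
  have hAnorm : ‖A‖ ≤ c₀ * Real.sqrt s.toReal := by
    have h1 := ContinuousLinearMap.opNorm_extend_le (f := T0) (e := e) (h_dense := hdense)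
      (h_e := hednorm)
    have h2 : ‖T0‖ ≤ c₀ * Real.sqrt s.toReal :=
      T0lin.mkContinuous_norm_le (by positivity) _
    calc ‖A‖ ≤ ((1 : NNReal) : ℝ) * ‖T0‖ := h1
      _ = ‖T0‖ := by rw [NNReal.coe_one, one_mul]
      _ ≤ _ := h2
  -- the functionals φ f on M
  have hqmem : ∀ u : ↥M, MemLp ((u : Lp ℝ 2 P) : Ω → ℝ) q P := fun u => (hrq q hq1 hqtop u).1
  have hpair : ∀ (f : Lp ℝ p P) (u : ↥M),
      Integrable (fun ω => (f : Ω → ℝ) ω * ((u : Lp ℝ 2 P) : Ω → ℝ) ω) P ∧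
      |∫ ω, (f : Ω → ℝ) ω * ((u : Lp ℝ 2 P) : Ω → ℝ) ω ∂P| ≤
        (eLpNorm (f : Ω → ℝ) p P).toReal
          * (eLpNorm ((u : Lp ℝ 2 P) : Ω → ℝ) q P).toReal :=
    fun f u => GaussProjAux.pairing P hab_p (Lp.memLp f) (hqmem u)
  let φlin : Lp ℝ p P → (↥M →ₗ[ℝ] ℝ) := fun f =>
    { toFun := fun u => ∫ ω, (f : Ω → ℝ) ω * ((u : Lp ℝ 2 P) : Ω → ℝ) ω ∂P
      map_add' := by
        intro u v
        have hadd : ((↑(u + v) : Lp ℝ 2 P) : Ω → ℝ)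
            =ᵐ[P] ((u : Lp ℝ 2 P) : Ω → ℝ) + ((v : Lp ℝ 2 P) : Ω → ℝ) := by
          have h0 : ((u + v : ↥M) : Lp ℝ 2 P) = (u : Lp ℝ 2 P) + (v : Lp ℝ 2 P) := rfl
          rw [h0]; exact Lp.coeFn_add _ _
        have hcong : (fun ω => (f : Ω → ℝ) ω * ((↑(u + v) : Lp ℝ 2 P) : Ω → ℝ) ω)
            =ᵐ[P] fun ω => (f : Ω → ℝ) ω * ((u : Lp ℝ 2 P) : Ω → ℝ) ω
              + (f : Ω → ℝ) ω * ((v : Lp ℝ 2 P) : Ω → ℝ) ω := by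
          filter_upwards [hadd] with ω h
          rw [h, Pi.add_apply]; ring
        rw [integral_congr_ae hcong, integral_add (hpair f u).1 (hpair f v).1]
      map_smul' := by
        intro a u
        have hsm : ((↑(a • u) : Lp ℝ 2 P) : Ω → ℝ)
            =ᵐ[P] fun ω => a * ((u : Lp ℝ 2 P) : Ω → ℝ) ω := by
          have h0 : ((a • u : ↥M) : Lp ℝ 2 P) = a • (u : Lp ℝ 2 P) := rfl
          rw [h0]
          filter_upwards [Lp.coeFn_smul a ((u : Lp ℝ 2 P))] with ω h
          rw [h, Pi.smul_apply, smul_eq_mul]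
        have hcong : (fun ω => (f : Ω → ℝ) ω * ((↑(a • u) : Lp ℝ 2 P) : Ω → ℝ) ω)
            =ᵐ[P] fun ω => a * ((f : Ω → ℝ) ω * ((u : Lp ℝ 2 P) : Ω → ℝ) ω) := by
          filter_upwards [hsm] with ω h
          rw [h]; ring
        rw [integral_congr_ae hcong, integral_const_mul, RingHom.id_apply, smul_eq_mul] }
  have hφb : ∀ (f : Lp ℝ p P) (u : ↥M),
      ‖φlin f u‖ ≤ (c₀ * Real.sqrt q.toReal * ‖f‖) * ‖u‖ := by
    intro f u
    have h2 := (hpair f u).2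
    have h3 := (hrq q hq1 hqtop u).2
    have h4 : (eLpNorm (f : Ω → ℝ) p P).toReal = ‖f‖ := rfl
    rw [Real.norm_eq_abs]
    calc |φlin f u| ≤ (eLpNorm (f : Ω → ℝ) p P).toReal
          * (eLpNorm ((u : Lp ℝ 2 P) : Ω → ℝ) q P).toReal := h2
      _ ≤ ‖f‖ * (c₀ * Real.sqrt q.toReal * ‖u‖) := by
          rw [h4]
          exact mul_le_mul_of_nonneg_left h3 (norm_nonneg f)
      _ = (c₀ * Real.sqrt q.toReal * ‖f‖) * ‖u‖ := by ring
  let φ : Lp ℝ p P → (↥M →L[ℝ] ℝ) := fun f =>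
    (φlin f).mkContinuous (c₀ * Real.sqrt q.toReal * ‖f‖) (hφb f)
  let ψ : Lp ℝ p P → (↥E →L[ℝ] ℝ) := fun f => (φ f).extend e
  let Rfun : Lp ℝ p P → ↥E := fun f => (InnerProductSpace.toDual ℝ ↥E).symm (ψ f)
  have hRinner : ∀ (f : Lp ℝ p P) (v : ↥E), (inner ℝ (Rfun f) v : ℝ) = ψ f v := fun f v =>
    InnerProductSpace.toDual_symm_apply
  have hRe : ∀ (f : Lp ℝ p P) (u : ↥M),
      (inner ℝ (Rfun f) (e u) : ℝ) = ∫ ω, (f : Ω → ℝ) ω * ((u : Lp ℝ 2 P) : Ω → ℝ) ω ∂P := by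
    intro f u
    rw [hRinner]
    have h1 : ψ f (e u) = φ f u := ContinuousLinearMap.extend_eq _ hdense hui _
    rw [h1]; rfl
  -- extensionality via density
  have hext : ∀ x y : ↥E, (∀ u : ↥M, (inner ℝ x (e u) : ℝ) = inner ℝ y (e u)) → x = y := by
    intro x y h
    have heq : (fun v : ↥E => (inner ℝ (x - y) v : ℝ)) = fun _ => (0 : ℝ) := by
      refine hdense.equalizer ?_ continuous_const ?_
      · exact (innerSL ℝ (x - y)).continuous
      · funext u
        simp only [Function.comp_apply, inner_sub_left, h u, sub_self]
    have h0 : (inner ℝ (x - y) (x - y) : ℝ) = 0 := congrFun heq (x - y)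
    rw [inner_self_eq_zero, sub_eq_zero] at h0
    exact h0
  -- R as a linear map
  let Rlin : Lp ℝ p P →ₗ[ℝ] ↥E :=
    { toFun := Rfun
      map_add' := by
        intro f1 f2
        apply hext
        intro u
        rw [inner_add_left, hRe, hRe, hRe]
        have hadd : ((f1 + f2 : Lp ℝ p P) : Ω → ℝ) =ᵐ[P] (f1 : Ω → ℝ) + (f2 : Ω → ℝ) :=
          Lp.coeFn_add f1 f2
        rw [← integral_add (hpair f1 u).1 (hpair f2 u).1]
        refine integral_congr_ae ?_
        filter_upwards [hadd] with ω h
        rw [h, Pi.add_apply]; ring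
      map_smul' := by
        intro a f
        apply hext
        intro u
        rw [RingHom.id_apply, inner_smul_left, hRe, hRe]
        have hsm : ((a • f : Lp ℝ p P) : Ω → ℝ) =ᵐ[P] fun ω => a * (f : Ω → ℝ) ω := by
          filter_upwards [Lp.coeFn_smul a f] with ω h
          rw [h, Pi.smul_apply, smul_eq_mul]
        rw [← integral_const_mul]
        refine integral_congr_ae ?_
        filter_upwards [hsm] with ω h
        rw [h]
        simp only [starRingEnd_apply, star_trivial]
        ring }
  have hRnorm : ∀ f : Lp ℝ p P, ‖Rlin f‖ ≤ (c₀ * Real.sqrt q.toReal) * ‖f‖ := by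
    intro f
    have h1 : ‖Rfun f‖ = ‖ψ f‖ := LinearIsometryEquiv.norm_map _ _
    have h2 : ‖ψ f‖ ≤ ((1 : NNReal) : ℝ) * ‖φ f‖ :=
      ContinuousLinearMap.opNorm_extend_le (f := φ f) (e := e) (h_dense := hdense)
        (h_e := hednorm)
    have h3 : ‖φ f‖ ≤ c₀ * Real.sqrt q.toReal * ‖f‖ :=
      (φlin f).mkContinuous_norm_le (by positivity) _
    calc ‖Rlin f‖ = ‖ψ f‖ := h1
      _ ≤ ‖φ f‖ := by rw [NNReal.coe_one, one_mul] at h2; exact h2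
      _ ≤ _ := h3
  let Rcont : Lp ℝ p P →L[ℝ] ↥E := Rlin.mkContinuous (c₀ * Real.sqrt q.toReal) hRnorm
  have hRcont : ∀ f, Rcont f = Rfun f := fun f => rfl
  -- the projection
  refine ⟨A.comp Rcont, ?_, ?_, ?_⟩
  · -- reproduces the Gaussian coefficients
    intro f k
    have hgs' : MemLp (g k) s' P := GaussProjAux.gmem P g hmeas hgauss hs'1 hs'top k
    have hpairs : ∀ h : Lp ℝ s P,
        Integrable (fun ω => (h : Ω → ℝ) ω * g k ω) P ∧
        |∫ ω, (h : Ω → ℝ) ω * g k ω ∂P| ≤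
          (eLpNorm (h : Ω → ℝ) s P).toReal * (eLpNorm (g k) s' P).toReal :=
      fun h => GaussProjAux.pairing P hab_s (Lp.memLp h) hgs'
    let ℓlin : Lp ℝ s P →ₗ[ℝ] ℝ :=
      { toFun := fun h => ∫ ω, (h : Ω → ℝ) ω * g k ω ∂P
        map_add' := by
          intro h1 h2
          rw [← integral_add (hpairs h1).1 (hpairs h2).1]
          refine integral_congr_ae ?_
          filter_upwards [Lp.coeFn_add h1 h2] with ω h
          rw [h, Pi.add_apply]; ring
        map_smul' := by
          intro a h1
          rw [RingHom.id_apply, smul_eq_mul, ← integral_const_mul]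
          refine integral_congr_ae ?_
          filter_upwards [Lp.coeFn_smul a h1] with ω h
          rw [h, Pi.smul_apply, smul_eq_mul]; ring }
    have hlb : ∀ h : Lp ℝ s P, ‖ℓlin h‖ ≤ (eLpNorm (g k) s' P).toReal * ‖h‖ := by
      intro h
      rw [Real.norm_eq_abs]
      calc |ℓlin h| ≤ (eLpNorm (h : Ω → ℝ) s P).toReal * (eLpNorm (g k) s' P).toReal :=
            (hpairs h).2
        _ = (eLpNorm (g k) s' P).toReal * (eLpNorm (h : Ω → ℝ) s P).toReal := mul_comm _ _
        _ = (eLpNorm (g k) s' P).toReal * ‖h‖ := by rw [← Lp.norm_def]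
    let l : Lp ℝ s P →L[ℝ] ℝ := ℓlin.mkContinuous _ hlb
    have hGkM : G2 k ∈ M := Submodule.subset_span ⟨k, rfl⟩
    have hPhieq : (fun v : ↥E => l (A v))
        = fun v : ↥E => (inner ℝ (e ⟨G2 k, hGkM⟩) v : ℝ) := by
      refine hdense.equalizer (l.continuous.comp A.continuous)
        ((innerSL ℝ (e ⟨G2 k, hGkM⟩)).continuous) ?_
      funext u
      simp only [Function.comp_apply]
      rw [hA u]
      have hL : l (T0 u) = ∫ ω, ((u : Lp ℝ 2 P) : Ω → ℝ) ω * g k ω ∂P := by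
        refine integral_congr_ae ?_
        filter_upwards [((hrq s hsle hs2 u).1).coeFn_toLp] with ω h
        rw [show ((T0 u : Lp ℝ s P) : Ω → ℝ) ω
          = ((((hrq s hsle hs2 u).1).toLp _ : Lp ℝ s P) : Ω → ℝ) ω from rfl, h]
      have hRt : (inner ℝ (e ⟨G2 k, hGkM⟩) (e u) : ℝ)
          = ∫ ω, ((u : Lp ℝ 2 P) : Ω → ℝ) ω * g k ω ∂P := by
        have h1 : (inner ℝ (e ⟨G2 k, hGkM⟩) (e u) : ℝ)
            = (inner ℝ (G2 k) ((u : Lp ℝ 2 P)) : ℝ) := rfl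
        rw [h1, MeasureTheory.L2.inner_def]
        refine integral_congr_ae ?_
        filter_upwards [(gmem2 k).coeFn_toLp] with ω h
        rw [RCLike.inner_apply, starRingEnd_apply, star_trivial, h, mul_comm]
      exact hL.trans hRt.symm
    have happ := congrFun hPhieq (Rcont f)
    have hR2 : (inner ℝ (e ⟨G2 k, hGkM⟩) (Rcont f) : ℝ) = ∫ ω, (f : Ω → ℝ) ω * g k ω ∂P := by
      have h0 : (inner ℝ (e ⟨G2 k, hGkM⟩) (Rcont f) : ℝ)
          = (inner ℝ (Rfun f) (e ⟨G2 k, hGkM⟩) : ℝ) := real_inner_comm _ _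
      rw [h0, hRe f ⟨G2 k, hGkM⟩]
      refine integral_congr_ae ?_
      filter_upwards [(gmem2 k).coeFn_toLp] with ω h
      rw [show (((⟨G2 k, hGkM⟩ : ↥M) : Lp ℝ 2 P) : Ω → ℝ) ω = ((G2 k : Lp ℝ 2 P) : Ω → ℝ) ω
        from rfl, h]
    calc ∫ ω, ((A.comp Rcont) f : Ω → ℝ) ω * g k ω ∂P = l (A (Rcont f)) := rfl
      _ = _ := happ.trans hR2
  · -- lands in the closed span
    intro f
    have hcoesumS : ∀ (t : Finset ℕ) (c : ℕ → ℝ),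
        ((∑ j ∈ t, c j • ((hgmem j).toLp (g j)) : Lp ℝ s P) : Ω → ℝ)
          =ᵐ[P] fun ω => ∑ j ∈ t, c j * g j ω := by
      intro t
      induction t using Finset.induction_on with
      | empty =>
        intro c
        simp only [Finset.sum_empty]
        filter_upwards [Lp.coeFn_zero ℝ s P] with ω h using h
      | insert _ _ ha ih =>
        rename_i a t
        intro c
        filter_upwards [Lp.coeFn_add (c a • ((hgmem a).toLp (g a)))
            (∑ j ∈ t, c j • ((hgmem j).toLp (g j))),
          Lp.coeFn_smul (c a) ((hgmem a).toLp (g a)), (hgmem a).coeFn_toLp, ih c]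
          with ω e1 e2 e3 e4
        rw [Finset.sum_insert ha, Finset.sum_insert ha, e1, Pi.add_apply, e2, Pi.smul_apply,
          e4, e3, smul_eq_mul]
    have hNsub : ∀ u : ↥M,
        T0 u ∈ Submodule.span ℝ (Set.range fun k => ((hgmem k).toLp (g k))) := by
      intro u
      obtain ⟨c, hc⟩ := Finsupp.mem_span_range_iff_exists_finsupp.mp u.2
      have hae : (((u : Lp ℝ 2 P)) : Ω → ℝ) =ᵐ[P] fun ω => ∑ j ∈ c.support, c j * g j ω := by
        rw [← hc, Finsupp.sum]
        exact hcoesum c.support fun j => c j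
      have heqT : T0 u = ∑ j ∈ c.support, c j • ((hgmem j).toLp (g j)) := by
        refine Lp.ext ?_
        filter_upwards [((hrq s hsle hs2 u).1).coeFn_toLp, hae,
          hcoesumS c.support fun j => c j] with ω e1 e2 e3
        exact e1.trans (e2.trans e3.symm)
      rw [heqT]
      exact Submodule.sum_mem _ fun j _ =>
        Submodule.smul_mem _ _ (Submodule.subset_span ⟨j, rfl⟩)
    have hclosed : IsClosed {v : ↥E | A v ∈
        (Submodule.span ℝ (Set.range fun k => ((hgmem k).toLp (g k)))).topologicalClosure} :=
      IsClosed.preimage A.continuous (Submodule.isClosed_topologicalClosure _)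
    have hsub : Set.range e ⊆ {v : ↥E | A v ∈
        (Submodule.span ℝ (Set.range fun k => ((hgmem k).toLp (g k)))).topologicalClosure} := by
      rintro _ ⟨u, rfl⟩
      simp only [Set.mem_setOf_eq, hA u]
      exact Submodule.le_topologicalClosure _ (hNsub u)
    have hall := closure_minimal hsub hclosed
    exact hall (hdense (Rcont f))
  · -- the γ₂ bound
    set C := c₀ ^ 2 * Real.sqrt (s.toReal * (p.toReal / (p.toReal - 1))) with hC
    have hfact : FactorsLrWith 2 one_le_two (A.comp Rcont) C := by
      refine ⟨Ω, inferInstance, P, (Submodule.subtypeL E).comp Rcont,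
        (NormedSpace.inclusionInDoubleDual ℝ (Lp ℝ s P)).comp
          (A.comp E.orthogonalProjectionOnto), ?_, ?_⟩
      · intro x
        have h1 := Submodule.orthogonalProjectionOnto_mem_subspace_eq_self (K := E) (Rcont x)
        simp only [ContinuousLinearMap.comp_apply]
        have h2 : (Submodule.subtypeL E) (Rcont x) = ((Rcont x : ↥E) : Lp ℝ 2 P) := rfl
        show (NormedSpace.inclusionInDoubleDual ℝ (Lp ℝ s P))
          (A (E.orthogonalProjectionOnto ((Rcont x : ↥E) : Lp ℝ 2 P))) = _
        rw [h1]
      · have hRn : ‖(Submodule.subtypeL E).comp Rcont‖ ≤ c₀ * Real.sqrt q.toReal := by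
          refine ContinuousLinearMap.opNorm_le_bound _ (by positivity) fun x => ?_
          have h0 : ‖((Submodule.subtypeL E).comp Rcont) x‖ = ‖Rcont x‖ := rfl
          rw [h0]
          calc ‖Rcont x‖ ≤ ‖Rcont‖ * ‖x‖ := Rcont.le_opNorm x
            _ ≤ (c₀ * Real.sqrt q.toReal) * ‖x‖ :=
              mul_le_mul_of_nonneg_right (Rlin.mkContinuous_norm_le (by positivity) _)
                (norm_nonneg x)
        have hSn : ‖(show Lp ℝ 2 P →L[ℝ] NormedSpace.Dual ℝ (NormedSpace.Dual ℝ (Lp ℝ s P)) from (NormedSpace.inclusionInDoubleDual ℝ (Lp ℝ s P)).comp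
            (A.comp E.orthogonalProjectionOnto))‖ ≤ c₀ * Real.sqrt s.toReal := by
          refine ContinuousLinearMap.opNorm_le_bound _ (by positivity) fun v => ?_
          calc ‖(show Lp ℝ 2 P →L[ℝ] NormedSpace.Dual ℝ (NormedSpace.Dual ℝ (Lp ℝ s P)) from (NormedSpace.inclusionInDoubleDual ℝ (Lp ℝ s P)).comp
                (A.comp E.orthogonalProjectionOnto)) v‖
              = ‖(NormedSpace.inclusionInDoubleDual ℝ (Lp ℝ s P))
                  (A (E.orthogonalProjectionOnto v))‖ := rfl
            _ ≤ ‖A (E.orthogonalProjectionOnto v)‖ := NormedSpace.double_dual_bound ℝ _ _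
            _ ≤ ‖A‖ * ‖E.orthogonalProjectionOnto v‖ := A.le_opNorm _
            _ ≤ (c₀ * Real.sqrt s.toReal) * ‖v‖ := by
                have h1 : ‖E.orthogonalProjectionOnto v‖ ≤ 1 * ‖v‖ :=
                  E.orthogonalProjectionOnto.le_of_opNorm_le (E.orthogonalProjectionOnto_norm_le) v
                rw [one_mul] at h1
                exact mul_le_mul hAnorm h1 (norm_nonneg _) (by positivity)
        calc ‖(show Lp ℝ 2 P →L[ℝ] NormedSpace.Dual ℝ (NormedSpace.Dual ℝ (Lp ℝ s P)) from (NormedSpace.inclusionInDoubleDual ℝ (Lp ℝ s P)).comp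
              (A.comp E.orthogonalProjectionOnto))‖ * ‖(Submodule.subtypeL E).comp Rcont‖
            ≤ (c₀ * Real.sqrt s.toReal) * (c₀ * Real.sqrt q.toReal) :=
              mul_le_mul hSn hRn (norm_nonneg _) (by positivity)
          _ = C := by
              rw [hC, ← hqt, Real.sqrt_mul (by linarith : (0:ℝ) ≤ s.toReal)]
              ring
    exact iInf_le _ (⟨C, hfact⟩ : {c : ℝ // FactorsLrWith 2 one_le_two (A.comp Rcont) c})
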